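/- arXiv:2404.09890 — 2 statements merged into one kernel-verified Lean document; each statement's English description precedes it below -/
import Mathlib

section
/- Let V be a finite-dimensional vector space over the field with two elements, q : V → 𝔽₂ a function, and define H(x,y) = q(x+y) − q(x) − q(y). Suppose H is a non-degenerate bilinear form and the affine transformation x ↦ Ax + b (with A linear, b ∈ V) preserves q, i.e. q(Ax+b) = q(x) for all x. Then the affine transformation has a fixed point: there exists y ∈ V with Ay + b = y. -/
/-- Atiyah's Lemma 5.1: an affine transformation `x ↦ Ax + b` of a
finite-dimensional `𝔽₂`-vector space preserving a quadratic function `q` whose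
associated bilinear form is non-degenerate has a fixed point. -/
theorem stmt_3 {V : Type*} [AddCommGroup V] [Module (ZMod 2) V]
    [FiniteDimensional (ZMod 2) V]
    (q : V → ZMod 2) (B : V →ₗ[ZMod 2] V →ₗ[ZMod 2] ZMod 2)
    (hB : ∀ x y : V, B x y = q (x + y) - q x - q y)
    (hnd : ∀ x : V, (∀ y : V, B x y = 0) → x = 0)
    (A : V →ₗ[ZMod 2] V) (b : V)
    (hq : ∀ x : V, q (A x + b) = q x) :
    ∃ y : V, A y + b = y := by
  have c2 : (2 : ZMod 2) = 0 := rfl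
  have hbb : ∀ v : V, v + v = 0 := by
    intro v
    have : (2 : ZMod 2) • v = 0 := by rw [c2, zero_smul]
    rwa [two_smul] at this
  have hvneg : ∀ v : V, -v = v := fun v => neg_eq_of_add_eq_zero_left (hbb v)
  -- q 0 = 0
  have hq0 : q 0 = 0 := by
    have h := hB 0 0
    simp only [add_zero, map_zero, LinearMap.zero_apply] at h
    linear_combination -h + q 0 * c2
  -- key: q(Az) expressed via q z
  have hqA : ∀ z : V, q (A z) = q z - q b - B (A z) b := by
    intro z
    have h := hB (A z) b
    rw [hq z] at h
    linear_combination -h + (q (A z) - q z + q b + B (A z) b) * c2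
  -- B (A x) (A y) = B x y + q b
  have hiso' : ∀ x y : V, B (A x) (A y) = B x y + q b := by
    intro x y
    have h1 := hB (A x) (A y)
    have h2 : A x + A y = A (x + y) := (map_add A x y).symm
    rw [h2, hqA (x + y), hqA x, hqA y, map_add A x y, map_add B (A x) (A y), LinearMap.add_apply] at h1
    have h3 := hB x y
    rw [h1, h3]
    ring
  -- q b = 0
  have hqb : q b = 0 := by
    have h := hiso' 0 0
    rw [map_zero] at h
    symm; simpa using h
  have hiso : ∀ x y : V, B (A x) (A y) = B x y := by
    intro x y; rw [hiso' x y, hqb, add_zero]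
  -- fixed vectors of A are orthogonal to b
  have hfix : ∀ x : V, A x = x → B x b = 0 := by
    intro x hx
    have h := hB (A x) b
    rw [hq x, hx] at h
    rw [h, hqb]
    ring
  -- A is bijective
  have Ainj : Function.Injective A := by
    rw [← LinearMap.ker_eq_bot, LinearMap.ker_eq_bot']
    intro x hx
    refine hnd x fun y => ?_
    have := hiso x y
    rw [hx, map_zero, LinearMap.zero_apply] at this
    exact this.symm
  have Asurj : Function.Surjective A := (LinearMap.injective_iff_surjective).mp Ainj
  -- B as a map to the dual is bijective
  have Binj : Function.Injective B := by
    intro x y hxy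
    have : x - y = 0 := by
      refine hnd _ fun z => ?_
      rw [map_sub, LinearMap.sub_apply, hxy, sub_self]
    exact sub_eq_zero.mp this
  have Bsurj : Function.Surjective (B : V →ₗ[ZMod 2] Module.Dual (ZMod 2) V) := by
    have h := Subspace.dual_finrank_eq (K := ZMod 2) (V := V)
    exact (LinearMap.injective_iff_surjective_of_finrank_eq_finrank h.symm).mp Binj
  -- it suffices to show b ∈ range (A + id)
  set W : Submodule (ZMod 2) V := LinearMap.range (A + LinearMap.id) with hW
  have hbW : b ∈ W := by
    rw [← Subspace.forall_mem_dualAnnihilator_apply_eq_zero_iff W b]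
    intro φ hφ
    obtain ⟨x, rfl⟩ := Bsurj φ
    rw [Submodule.mem_dualAnnihilator] at hφ
    -- x is orthogonal to all A y + y, hence B x (A y) = B x y
    have hxA : ∀ y : V, B x (A y) = B x y := by
      intro y
      have h := hφ (A y + y) ⟨y, rfl⟩
      rw [map_add] at h
      linear_combination h - B x y * c2
    -- hence A x = x
    have hAx : A x = x := by
      have : A x - x = 0 := by
        refine hnd _ fun z => ?_
        obtain ⟨y, rfl⟩ := Asurj z
        rw [map_sub, LinearMap.sub_apply, hiso x y, hxA y, sub_self]
      have := sub_eq_zero.mp this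
      exact this
    exact hfix x hAx
  obtain ⟨y, hy⟩ := hbW
  refine ⟨y, ?_⟩
  rw [LinearMap.add_apply, LinearMap.id_apply] at hy
  rw [← hy, ← add_assoc, hbb (A y), zero_add]
end

section
/- Let c₁, …, c_r be positive integers and define d_i = gcd over all size-i subsets S of {1,…,r} of ∏_{j∈S} c_j, with d₀ = 1, and N = lcm(cᵢ). Then ℤ/Nℤ ⊕ ⨁_{i=1}^{r−1} ℤ/(d_i/d_{i−1})ℤ ≅ ⨁_{i=1}^{r} ℤ/cᵢℤ as abelian groups. -/
/-- `d i` is the gcd over all size-`i` subsets `S` of `{1,…,r}` of `∏_{j∈S} c j`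
(so `d 0 = 1`, being the gcd of the empty product). -/
def subsetGcd {r : ℕ} (c : Fin r → ℕ) (i : ℕ) : ℕ :=
  ((Finset.univ : Finset (Fin r)).powersetCard i).gcd fun S => ∏ j ∈ S, c j

/-!
By the Chinese remainder theorem, two finite products of cyclic groups are isomorphic as soon as,
for every prime `p`, the `p`-adic valuations of their orders agree up to a rearrangement.
Sort the valuations `v_p (c i)` increasingly. Then `v_p (d_k)` is the sum of the `k` smallest
ones, so `v_p (d_(k+1) / d_k)` is the `(k+1)`-st smallest, while `v_p N` is the largest: the
orders on the left have exactly the sorted valuations of the `c i`.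
-/

open Finset

noncomputable def ZMod.ringEquivPiPrimePow {n : ℕ} (hn : n ≠ 0) (P : Finset ℕ)
    (hP : ∀ p ∈ P, p.Prime) (hnP : n.primeFactors ⊆ P) :
    ZMod n ≃+* ∀ p : P, ZMod ((p : ℕ) ^ n.factorization p) :=
  have hcop : Pairwise (Function.onFun Nat.Coprime fun p : P => (p : ℕ) ^ n.factorization p) :=
    fun p q hpq => Nat.Coprime.pow _ _
      ((Nat.coprime_primes (hP p p.2) (hP q q.2)).mpr (Subtype.coe_ne_coe.mpr hpq))
  have hprod : n = ∏ p : P, (p : ℕ) ^ n.factorization p := by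
    rw [prod_coe_sort P fun p => p ^ n.factorization p, ← Finsupp.prod_of_support_subset _
      (by rwa [Nat.support_factorization]) _ fun _ _ => pow_zero _,
      Nat.prod_factorization_pow_eq_self hn]
  (ZMod.ringEquivCongr hprod).trans (ZMod.prodEquivPi _ hcop)

def RingEquiv.piComm {ι κ : Type*} (R : ι → κ → Type*)
    [∀ i k, NonUnitalNonAssocSemiring (R i k)] : (∀ i k, R i k) ≃+* ∀ k i, R i k :=
  { Equiv.piComm R with map_add' := fun _ _ => rfl, map_mul' := fun _ _ => rfl }

noncomputable def ZMod.piRingEquivPiPrimePow {ι : Type*} [Fintype ι] (a : ι → ℕ)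
    (ha : ∀ i, a i ≠ 0) (P : Finset ℕ) (hP : ∀ p ∈ P, p.Prime)
    (haP : ∀ i, (a i).primeFactors ⊆ P) :
    (∀ i, ZMod (a i)) ≃+* ∀ p : P, ∀ i, ZMod ((p : ℕ) ^ (a i).factorization p) :=
  (RingEquiv.piCongrRight fun i => ZMod.ringEquivPiPrimePow (ha i) P hP (haP i)).trans
    (RingEquiv.piComm _)

def ZMod.piRingEquivOfEquiv {ι κ : Type*} {a : ι → ℕ} {b : κ → ℕ} (σ : ι ≃ κ)
    (h : ∀ i, a i = b (σ i)) : (∀ i, ZMod (a i)) ≃+* ∀ k, ZMod (b k) :=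
  (RingEquiv.piCongrRight fun i => ZMod.ringEquivCongr (h i)).trans
    (RingEquiv.piCongrLeft (fun k => ZMod (b k)) σ)

theorem ZMod.nonempty_piRingEquiv_of_factorization {ι κ : Type*} [Fintype ι] [Fintype κ]
    {a : ι → ℕ} {b : κ → ℕ} (ha : ∀ i, a i ≠ 0) (hb : ∀ k, b k ≠ 0)
    (h : ∀ p, p.Prime → ∃ σ : ι ≃ κ, ∀ i, (a i).factorization p = (b (σ i)).factorization p) :
    Nonempty ((∀ i, ZMod (a i)) ≃+* ∀ k, ZMod (b k)) := by
  choose σ hσ using h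
  set P := ((∏ i, a i) * ∏ k, b k).primeFactors
  have hP : ∀ p ∈ P, p.Prime := fun p => Nat.prime_of_mem_primeFactors
  have hprod : (∏ i, a i) * ∏ k, b k ≠ 0 :=
    mul_ne_zero (prod_ne_zero_iff.mpr fun i _ => ha i) (prod_ne_zero_iff.mpr fun k _ => hb k)
  have haP : ∀ i, (a i).primeFactors ⊆ P := fun i => Nat.primeFactors_mono
    ((dvd_prod_of_mem a (mem_univ i)).mul_right _) hprod
  have hbP : ∀ k, (b k).primeFactors ⊆ P := fun k => Nat.primeFactors_mono
    ((dvd_prod_of_mem b (mem_univ k)).mul_left _) hprod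
  exact ⟨(ZMod.piRingEquivPiPrimePow a ha P hP haP).trans <|
    (RingEquiv.piCongrRight fun p : P => ZMod.piRingEquivOfEquiv (σ p (hP p p.2))
      fun i => congrArg (p.1 ^ ·) (hσ p (hP p p.2) i)).trans
    (ZMod.piRingEquivPiPrimePow b hb P hP hbP).symm⟩

theorem Fin.le_apply_of_strictMono {k : ℕ} {f : Fin k → ℕ} (hf : StrictMono f) :
    ∀ i : Fin k, (i : ℕ) ≤ f i
  | ⟨0, _⟩ => Nat.zero_le _
  | ⟨n + 1, hn⟩ =>
    (Fin.le_apply_of_strictMono hf ⟨n, by omega⟩).trans_lt (hf (Fin.mk_lt_mk.mpr n.lt_succ_self))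

theorem Monotone.sum_castLE_le_sum {M : Type*} [AddCommMonoid M] [PartialOrder M]
    [IsOrderedAddMonoid M] {r k : ℕ} {g : Fin r → M} (hg : Monotone g) (hk : k ≤ r)
    {S : Finset (Fin r)} (hS : S.card = k) :
    ∑ i : Fin k, g (Fin.castLE hk i) ≤ ∑ j ∈ S, g j := by
  rw [← S.map_orderEmbOfFin_univ hS, sum_map]
  exact sum_le_sum fun i _ => hg <| Fin.le_def.mpr <|
    Fin.le_apply_of_strictMono (Fin.val_strictMono.comp (S.orderEmbOfFin hS).strictMono) i

theorem Finset.factorization_gcd_eq_of_forall_le {ι : Type*} {s : Finset ι} {f : ι → ℕ}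
    {p : ℕ} (hp : p.Prime) (hf : ∀ i ∈ s, f i ≠ 0) {i₀ : ι} (hi₀ : i₀ ∈ s)
    (hmin : ∀ i ∈ s, (f i₀).factorization p ≤ (f i).factorization p) :
    (s.gcd f).factorization p = (f i₀).factorization p := by
  have hgcd : s.gcd f ≠ 0 := fun h => hf i₀ hi₀ (gcd_eq_zero_iff.mp h i₀ hi₀)
  refine le_antisymm ?_ ?_
  · exact (Nat.factorization_le_iff_dvd hgcd (hf i₀ hi₀)).mpr (gcd_dvd hi₀) p
  · refine (hp.pow_dvd_iff_le_factorization hgcd).mp (dvd_gcd fun i hi => ?_)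
    exact (hp.pow_dvd_iff_le_factorization (hf i hi)).mpr (hmin i hi)

theorem Finset.factorization_lcm_eq_of_forall_le {ι : Type*} {s : Finset ι} {f : ι → ℕ}
    (hf : ∀ i ∈ s, f i ≠ 0) (p : ℕ) {i₀ : ι} (hi₀ : i₀ ∈ s)
    (hmax : ∀ i ∈ s, (f i).factorization p ≤ (f i₀).factorization p) :
    (s.lcm f).factorization p = (f i₀).factorization p := by
  rw [factorization_lcm hf]
  exact le_antisymm (Finset.sup_le hmax) (le_sup (f := fun i => (f i).factorization p) hi₀)

section SubsetGcd

variable {r : ℕ} (c : Fin r → ℕ)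

theorem subsetGcd_dvd_prod {k : ℕ} {S : Finset (Fin r)} (hS : S.card = k) :
    subsetGcd c k ∣ ∏ j ∈ S, c j :=
  gcd_dvd (mem_powersetCard.mpr ⟨subset_univ S, hS⟩)

theorem subsetGcd_ne_zero (hc : ∀ i, c i ≠ 0) {k : ℕ} (hk : k ≤ r) : subsetGcd c k ≠ 0 := by
  obtain ⟨S, hS⟩ :=
    powersetCard_nonempty.mpr (by simpa using hk : k ≤ (univ : Finset (Fin r)).card)
  exact fun h => prod_ne_zero_iff.mpr (fun j _ => hc j) (gcd_eq_zero_iff.mp h S hS)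

theorem subsetGcd_dvd_subsetGcd_succ (k : ℕ) : subsetGcd c k ∣ subsetGcd c (k + 1) := by
  refine dvd_gcd fun S hS => ?_
  obtain ⟨T, hTS, hT⟩ := exists_subset_card_eq (show k ≤ S.card by
    rw [(mem_powersetCard.mp hS).2]; exact k.le_succ)
  exact (subsetGcd_dvd_prod c hT).trans (prod_dvd_prod_of_subset T S c hTS)

theorem factorization_subsetGcd_of_monotone (hc : ∀ i, c i ≠ 0) {p : ℕ} (hp : p.Prime)
    (hmono : Monotone fun i => (c i).factorization p) {k : ℕ} (hk : k ≤ r) :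
    (subsetGcd c k).factorization p = ∑ i : Fin k, (c (Fin.castLE hk i)).factorization p := by
  have hprod (S : Finset (Fin r)) :
      (∏ j ∈ S, c j).factorization p = ∑ j ∈ S, (c j).factorization p := by
    rw [Nat.factorization_prod fun j _ => hc j, Finsupp.finsetSum_apply]
  have hinit : (univ.map (Fin.castLEEmb hk)).card = k := by simp
  rw [subsetGcd, factorization_gcd_eq_of_forall_le hp
    (fun S _ => prod_ne_zero_iff.mpr fun j _ => hc j)
    (mem_powersetCard.mpr ⟨subset_univ _, hinit⟩), hprod, sum_map]
  · rfl
  intro S hS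
  rw [hprod, hprod, sum_map]
  exact hmono.sum_castLE_le_sum hk (mem_powersetCard.mp hS).2

theorem subsetGcd_comp_perm (σ : Equiv.Perm (Fin r)) (k : ℕ) :
    subsetGcd (c ∘ σ) k = subsetGcd c k := by
  conv_rhs => rw [subsetGcd, ← map_univ_equiv σ, powersetCard_map, map_eq_image, gcd_image]
  exact gcd_congr rfl fun S _ => (prod_map S σ.toEmbedding c).symm

theorem factorization_subsetGcd_succ_div_of_monotone (hc : ∀ i, c i ≠ 0) {p : ℕ} (hp : p.Prime)
    (hmono : Monotone fun i => (c i).factorization p) {k : ℕ} (hk : k < r) :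
    (subsetGcd c (k + 1) / subsetGcd c k).factorization p = (c ⟨k, hk⟩).factorization p := by
  rw [Nat.factorization_div (subsetGcd_dvd_subsetGcd_succ c k), Finsupp.tsub_apply,
    factorization_subsetGcd_of_monotone c hc hp hmono hk,
    factorization_subsetGcd_of_monotone c hc hp hmono hk.le, Fin.sum_univ_castSucc]
  exact Nat.add_sub_cancel_left _ _

end SubsetGcd

section CyclicOrders

variable {r : ℕ} (c : Fin (r + 1) → ℕ)

-- The orders of the cyclic factors on the left: `none ↦ N = lcm c`, `some i ↦ d_(i+1) / d_i`.
def cyclicOrders (o : Option (Fin r)) : ℕ :=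
  o.elim (univ.lcm c) fun i => subsetGcd c (i.1 + 1) / subsetGcd c i.1

theorem cyclicOrders_ne_zero (hc : ∀ i, c i ≠ 0) (o : Option (Fin r)) :
    cyclicOrders c o ≠ 0 := by
  cases o with
  | none => exact (Finset.lcm_ne_zero_iff.mpr fun i _ => hc i : univ.lcm c ≠ 0)
  | some i =>
    exact (Nat.div_ne_zero_iff_of_dvd (subsetGcd_dvd_subsetGcd_succ c i)).mpr
      ⟨subsetGcd_ne_zero c hc (by omega), subsetGcd_ne_zero c hc (by omega)⟩

theorem exists_equiv_factorization_cyclicOrders_eq (hc : ∀ i, c i ≠ 0) {p : ℕ} (hp : p.Prime) :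
    ∃ σ : Option (Fin r) ≃ Fin (r + 1), ∀ o,
      (cyclicOrders c o).factorization p = (c (σ o)).factorization p := by
  set τ := Tuple.sort fun i => (c i).factorization p
  have hmono : Monotone fun i => ((c ∘ τ) i).factorization p :=
    Tuple.monotone_sort fun i => (c i).factorization p
  refine ⟨finSuccEquivLast.symm.trans τ, ?_⟩
  rintro (_ | i)
  · refine factorization_lcm_eq_of_forall_le (fun i _ => hc i) p (mem_univ _) fun i _ => ?_
    simpa using hmono (Fin.le_last (τ.symm i))
  · rw [cyclicOrders, Option.elim_some, ← subsetGcd_comp_perm c τ, ← subsetGcd_comp_perm c τ,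
      factorization_subsetGcd_succ_div_of_monotone (c ∘ τ) (fun i => hc _) hp hmono
        (Nat.lt_succ_of_lt i.2), Equiv.trans_apply, finSuccEquivLast_symm_some]
    rfl

end CyclicOrders

/-- With `d_i` the gcd of size-`i` products of the `cᵢ` and `N = lcm(cᵢ)`,
`ℤ/N ⊕ ⨁_{i=1}^{r−1} ℤ/(d_i/d_{i−1}) ≅ ⨁_{i=1}^{r} ℤ/cᵢ`. -/
theorem stmt_17 {r : ℕ} (c : Fin r → ℕ) (hc : ∀ i, 0 < c i)
    (N : ℕ) (hN : N = Finset.univ.lcm c) :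
    Nonempty
      ((ZMod N × ∀ i : Fin (r - 1), ZMod (subsetGcd c (i.1 + 1) / subsetGcd c i.1))
        ≃+ (∀ i : Fin r, ZMod (c i))) := by
  subst hN
  have hc' : ∀ i, c i ≠ 0 := fun i => (hc i).ne'
  cases r with
  | zero =>
    rw [univ_eq_empty, lcm_empty]
    have : IsEmpty (Fin (0 - 1)) := Fin.isEmpty'
    exact ⟨AddEquiv.prodUnique.trans AddEquiv.ofUnique⟩
  | succ r =>
    obtain ⟨e⟩ := ZMod.nonempty_piRingEquiv_of_factorization (cyclicOrders_ne_zero c hc') hc'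
      fun p hp => exists_equiv_factorization_cyclicOrders_eq c hc' hp
    exact ⟨(RingEquiv.piOptionEquivProd.symm.trans e).toAddEquiv⟩
end
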